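/- Let Q be an Ω-algebra and (S,u) the Q-Sierpinski space (S = Q, u = ⟨{id_Q}⟩). Then for every Q-topological space (X,τ), τ is the smallest Q-topology on X making every Q-continuous map f : (X,τ) → (S,u) Q-continuous; i.e., if τ' is any Q-topology on X such that q ∘ f ∈ τ' for all Q-continuous f : (X,τ) → (S,u) and all q ∈ u, then τ ⊆ τ'. -/

import Mathlib

universe u v w x

/-- Closure of a set of `Q`-valued functions on `X` under the pointwise
Ω-algebra operations `ops`. -/
def Closed {Q : Type u} {I : Type v} {n : I → Type w} (ops : ∀ i, (n i → Q) → Q)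
    {X : Type x} (B : Set (X → Q)) : Prop :=
  ∀ i (p : n i → X → Q), (∀ j, p j ∈ B) → (fun x => ops i (fun j => p j x)) ∈ B

/-- A `Q`-topology on `X`: a nonempty subset of `Q^X` closed under the
pointwise operations, i.e. a subalgebra of the power algebra. -/
def IsQTop {Q : Type u} {I : Type v} {n : I → Type w} (ops : ∀ i, (n i → Q) → Q)
    {X : Type x} (τ : Set (X → Q)) : Prop :=
  τ.Nonempty ∧ Closed ops τ

/-- The subalgebra of `Q^X` generated by `S`: the intersection of all
subalgebras containing `S`. -/
def gen {Q : Type u} {I : Type v} {n : I → Type w} (ops : ∀ i, (n i → Q) → Q)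
    {X : Type x} (S : Set (X → Q)) : Set (X → Q) :=
  ⋂₀ {B | S ⊆ B ∧ IsQTop ops B}

/-- `Q`-continuity of `f : (X,τ) → (Y,η)` : preimages `α ∘ f` of members of `η`
belong to `τ`. -/
def QCont {Q : Type u} {I : Type v} {n : I → Type w} (ops : ∀ i, (n i → Q) → Q)
    {X : Type x} {Y : Type x} (τ : Set (X → Q)) (η : Set (Y → Q)) (f : X → Y) : Prop :=
  ∀ α ∈ η, (fun x => α (f x)) ∈ τ

/-- The `Q`-Sierpinski topology on `S = Q`: the subalgebra of `Q^Q` generated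
by the identity map. -/
def sierp {Q : Type u} {I : Type v} {n : I → Type w} (ops : ∀ i, (n i → Q) → Q) :
    Set (Q → Q) :=
  gen ops ({id} : Set (Q → Q))

/-! The Q-continuous maps `(X, τ) → (S, u)` are exactly the members of `τ`: the identity
lies in `u`, and conversely `{β | β ∘ f ∈ τ}` is a subalgebra of `Q^Q` containing the
identity whenever `f ∈ τ`, so it contains the generated subalgebra `u`. Applying the
hypothesis on `τ'` to such an `f` and `q = id` puts `f` into `τ'`. -/

section Generated

variable {Q : Type u} {I : Type v} {n : I → Type w} (ops : ∀ i, (n i → Q) → Q)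
  {X : Type x}

theorem subset_gen (S : Set (X → Q)) : S ⊆ gen ops S :=
  fun _ hα _ hB => hB.1 hα

theorem gen_subset {S B : Set (X → Q)} (hSB : S ⊆ B) (hB : IsQTop ops B) : gen ops S ⊆ B :=
  Set.sInter_subset_of_mem ⟨hSB, hB⟩

theorem id_mem_sierp : (id : Q → Q) ∈ sierp ops :=
  subset_gen ops _ rfl

end Generated

section Continuity

variable {Q : Type u} {I : Type v} {n : I → Type w} {ops : ∀ i, (n i → Q) → Q}
  {X Y : Type x}

theorem Closed.comp_preimage {τ : Set (X → Q)} (hτ : Closed ops τ) (f : X → Y) :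
    Closed ops {β : Y → Q | (fun x => β (f x)) ∈ τ} :=
  fun i p hp => hτ i (fun j x => p j (f x)) hp

theorem qCont_gen {τ : Set (X → Q)} (hτ : Closed ops τ) {S : Set (Y → Q)} (hS : S.Nonempty)
    {f : X → Y} (hf : ∀ α ∈ S, (fun x => α (f x)) ∈ τ) : QCont ops τ (gen ops S) f :=
  gen_subset ops hf ⟨hS.mono hf, hτ.comp_preimage f⟩

theorem qCont_sierp_iff {Z : Type u} {τ : Set (Z → Q)} (hτ : Closed ops τ) {f : Z → Q} :
    QCont ops τ (sierp ops) f ↔ f ∈ τ :=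
  ⟨fun hf => hf id (id_mem_sierp ops),
    fun hf => qCont_gen hτ (Set.singleton_nonempty id) fun _ hα => hα ▸ hf⟩

end Continuity

theorem stmt_7_general {Q : Type u} {I : Type v} {n : I → Type w} (ops : ∀ i, (n i → Q) → Q)
    {X : Type u} (τ τ' : Set (X → Q)) (hτ : IsQTop ops τ)
    (h : ∀ f : X → Q, QCont ops τ (sierp ops) f →
      ∀ q ∈ sierp ops, (fun x => q (f x)) ∈ τ') :
    τ ⊆ τ' :=
  fun f hf => h f ((qCont_sierp_iff hτ.2).2 hf) id (id_mem_sierp ops)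

theorem stmt_7 {Q : Type u} {I : Type v} {n : I → Type w} (ops : ∀ i, (n i → Q) → Q)
    {X : Type u} (τ τ' : Set (X → Q)) (hτ : IsQTop ops τ) (hτ' : IsQTop ops τ')
    (h : ∀ f : X → Q, QCont ops τ (sierp ops) f →
      ∀ q ∈ sierp ops, (fun x => q (f x)) ∈ τ') :
    τ ⊆ τ' :=
  stmt_7_general ops τ τ' hτ h
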